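/- arXiv:2301.07874 — 6 statements merged into one kernel-verified Lean document; each statement's English description precedes it below -/
import Mathlib

section
/- For any connected unicyclic graph G on n ≥ 3 vertices, GA(G) ≤ n, with equality if and only if G is the cycle C_n. -/
open scoped Classical

noncomputable def GA {V : Type*} [Fintype V] (G : SimpleGraph V) : ℝ :=
  ∑ e ∈ G.edgeFinset,
    Sym2.lift ⟨fun u v => 2 * Real.sqrt ((G.degree u : ℝ) * (G.degree v : ℝ))
        / ((G.degree u : ℝ) + (G.degree v : ℝ)),
      fun u v => by dsimp only; rw [mul_comm ((G.degree u : ℝ)), add_comm ((G.degree u : ℝ))]⟩ e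

namespace GAProof

open SimpleGraph

variable {V : Type*} [Fintype V]

lemma term_le_one {x y : ℝ} (hx : 0 < x) (hy : 0 < y) :
    2 * Real.sqrt (x * y) / (x + y) ≤ 1 := by
  rw [div_le_one (by linarith)]
  nlinarith [sq_nonneg (Real.sqrt x - Real.sqrt y), Real.sq_sqrt hx.le, Real.sq_sqrt hy.le,
    Real.sqrt_mul hx.le y, Real.sqrt_nonneg x, Real.sqrt_nonneg y]

lemma term_eq_one_iff {x y : ℝ} (hx : 0 < x) (hy : 0 < y) :
    2 * Real.sqrt (x * y) / (x + y) = 1 ↔ x = y := by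
  rw [div_eq_one_iff_eq (by positivity)]
  constructor
  · intro h
    have h1 : Real.sqrt x ^ 2 = x := Real.sq_sqrt hx.le
    have h2 : Real.sqrt y ^ 2 = y := Real.sq_sqrt hy.le
    have h3 : Real.sqrt (x*y) = Real.sqrt x * Real.sqrt y := Real.sqrt_mul hx.le y
    have h4 : (Real.sqrt x - Real.sqrt y)^2 = 0 := by nlinarith
    have h5 : Real.sqrt x = Real.sqrt y := by
      have := pow_eq_zero_iff (n := 2) (by norm_num) |>.mp h4; linarith
    rw [← h1, ← h2, h5]
  · rintro rfl
    rw [Real.sqrt_mul_self hx.le]; ring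

noncomputable def nxt (G : SimpleGraph V) (a v : V) : V :=
  if h : ∃ b, G.Adj v b ∧ b ≠ a ∧ ∀ c, G.Adj v c → c ≠ a → c = b then h.choose else a

lemma nxt_spec {G : SimpleGraph V} (hreg : ∀ v, G.degree v = 2) {a v : V} (hadj : G.Adj v a) :
    G.Adj v (nxt G a v) ∧ nxt G a v ≠ a ∧ ∀ c, G.Adj v c → c ≠ a → c = nxt G a v := by
  have hex : ∃ b, G.Adj v b ∧ b ≠ a ∧ ∀ c, G.Adj v c → c ≠ a → c = b := by
    have ha : a ∈ G.neighborFinset v := by simpa using hadj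
    have h1 : ((G.neighborFinset v).erase a).card = 1 := by
      rw [Finset.card_erase_of_mem ha, card_neighborFinset_eq_degree, hreg v]
    obtain ⟨b, hb⟩ := Finset.card_eq_one.mp h1
    have hbmem : b ∈ (G.neighborFinset v).erase a := hb ▸ Finset.mem_singleton_self b
    refine ⟨b, ?_, (Finset.mem_erase.mp hbmem).1, ?_⟩
    · simpa using (Finset.mem_erase.mp hbmem).2
    · intro c hc hca
      have : c ∈ (G.neighborFinset v).erase a := Finset.mem_erase.mpr ⟨hca, by simpa using hc⟩
      rw [hb] at this; exact Finset.mem_singleton.mp this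
  rw [nxt, dif_pos hex]
  exact ⟨hex.choose_spec.1, hex.choose_spec.2.1, hex.choose_spec.2.2⟩

noncomputable def seq (G : SimpleGraph V) (v0 v1 : V) : ℕ → V × V
  | 0 => (v0, v1)
  | k+1 => ((seq G v0 v1 k).2, nxt G (seq G v0 v1 k).1 (seq G v0 v1 k).2)

lemma closed_walk {G : SimpleGraph V} {S : Set V}
    (hS : ∀ ⦃w⦄, w ∈ S → ∀ ⦃c⦄, G.Adj w c → c ∈ S) :
    ∀ {a b : V}, G.Walk a b → a ∈ S → b ∈ S := by
  intro a b p
  induction p with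
  | nil => exact id
  | cons h _ ih => exact fun ha => ih (hS ha h)

set_option maxHeartbeats 1000000 in
lemma exists_iso_cycle (G : SimpleGraph V) (n : ℕ)
    (hcard : Fintype.card V = n) (hn : 3 ≤ n) (hconn : G.Connected)
    (hreg : ∀ v, G.degree v = 2) : Nonempty (G ≃g SimpleGraph.cycleGraph n) := by
  obtain ⟨m, rfl⟩ : ∃ m, n = m + 3 := ⟨n - 3, by omega⟩
  have hNe : Nonempty V := Fintype.card_pos_iff.mp (by omega)
  obtain ⟨v0⟩ := hNe
  obtain ⟨v1, h01⟩ : ∃ w, G.Adj v0 w :=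
    (G.degree_pos_iff_exists_adj v0).mp (by rw [hreg]; norm_num)
  set f : ℕ → V := fun k => (seq G v0 v1 k).1 with hfdef
  have hfsucc : ∀ k, f (k+1) = (seq G v0 v1 k).2 := fun k => rfl
  have hfnxt : ∀ k, f (k+2) = nxt G (f k) (f (k+1)) := fun k => rfl
  -- adjacency along the sequence
  have hadj : ∀ k, G.Adj (f k) (f (k+1)) := by
    intro k
    induction k with
    | zero => exact h01
    | succ k ih =>
      have := (nxt_spec hreg ih.symm).1
      rw [hfnxt k]
      exact this
  have hne2 : ∀ k, f (k+2) ≠ f k := by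
    intro k
    rw [hfnxt k]
    exact (nxt_spec hreg (hadj k).symm).2.1
  have huniq : ∀ k c, G.Adj (f (k+1)) c → c ≠ f k → c = f (k+2) := by
    intro k c h1 h2
    rw [hfnxt k]
    exact (nxt_spec hreg (hadj k).symm).2.2 c h1 h2
  -- pigeonhole: a repeat exists
  have hP : ∃ j, ∃ i, i < j ∧ f i = f j := by
    have hni : ¬Function.Injective (fun k : Fin (m+4) => f k) := by
      intro hinj
      have := Fintype.card_le_of_injective _ hinj
      rw [Fintype.card_fin, hcard] at this
      omega
    obtain ⟨a, b, hab, hne⟩ := Function.not_injective_iff.mp hni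
    rcases lt_or_gt_of_ne (fun h => hne (Fin.ext h)) with h | h
    · exact ⟨b, a, h, hab⟩
    · exact ⟨a, b, h, hab.symm⟩
  obtain ⟨j, ⟨i, hij, hfij⟩, hjmin⟩ :
      ∃ j, (∃ i, i < j ∧ f i = f j) ∧ ∀ m, m < j → ¬∃ i, i < m ∧ f i = f m :=
    ⟨Nat.find hP, Nat.find_spec hP, fun m hm => Nat.find_min hP hm⟩
  have hinj : ∀ a b, a < j → b < j → f a = f b → a = b := by
    intro a b ha hb hab
    by_contra hne
    rcases lt_or_gt_of_ne hne with h | h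
    · exact hjmin b hb ⟨a, h, hab⟩
    · exact hjmin a ha ⟨b, h, hab.symm⟩
  have hji2 : i + 2 ≤ j := by
    rcases Nat.lt_or_ge (i+1) j with h | h
    · omega
    · have : j = i + 1 := by omega
      exact absurd (this ▸ hfij) (hadj i).ne
  have hi0 : i = 0 := by
    by_contra hi
    obtain ⟨i', rfl⟩ : ∃ i', i = i' + 1 := ⟨i - 1, by omega⟩
    have hadjj : G.Adj (f (i'+1)) (f (j-1)) := by
      have h := (hadj (j-1)).symm
      rw [show j - 1 + 1 = j by omega] at h
      rw [hfij]
      exact h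
    by_cases hc : f (j-1) = f i'
    · have := hinj (j-1) i' (by omega) (by omega) hc
      omega
    · have := huniq i' (f (j-1)) hadjj hc
      have h2 := hinj (j-1) (i'+2) (by omega) (by omega) this
      have : j = i' + 3 := by omega
      subst this
      exact hne2 (i'+1) hfij.symm
  subst hi0
  have hj3 : 3 ≤ j := by
    have h2 : j ≠ 2 := by
      intro h
      subst h
      exact hne2 0 hfij.symm
    omega
  obtain ⟨j', rfl⟩ : ∃ j', j = j' + 1 := ⟨j - 1, by omega⟩
  have hfj1 : f (j' + 2) = f 1 := by
    have hadj1 : G.Adj (f (j'+1)) (f 1) := by rw [← hfij]; exact hadj 0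
    have h1 : f 1 ≠ f j' := fun h => by
      have := hinj 1 j' (by omega) (by omega) h; omega
    exact (huniq j' (f 1) hadj1 h1).symm
  -- the image of the sequence is closed under adjacency
  set S : Set V := f '' Set.Iio (j'+1) with hSdef
  have hclosed : ∀ ⦃w⦄, w ∈ S → ∀ ⦃c⦄, G.Adj w c → c ∈ S := by
    rintro w ⟨k, hk, rfl⟩ c hc
    simp only [Set.mem_Iio] at hk
    match k with
    | 0 =>
      have hc' : G.Adj (f (j'+1)) c := by rw [← hfij]; exact hc
      by_cases h : c = f j'
      · exact ⟨j', Set.mem_Iio.mpr (by omega), h.symm⟩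
      · exact ⟨1, Set.mem_Iio.mpr (by omega), by rw [← hfj1]; exact (huniq j' c hc' h).symm⟩
    | k+1 =>
      by_cases h : c = f k
      · exact ⟨k, Set.mem_Iio.mpr (by omega), h.symm⟩
      · have hck := huniq k c hc h
        rcases Nat.lt_or_ge (k+2) (j'+1) with h2 | h2
        · exact ⟨k+2, Set.mem_Iio.mpr h2, hck.symm⟩
        · have hk2 : k + 2 = j' + 1 := by omega
          exact ⟨0, Set.mem_Iio.mpr (by omega), by rw [hfij, ← hk2]; exact hck.symm⟩
  have huniv : ∀ w, w ∈ S := by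
    intro w
    obtain ⟨p⟩ := hconn v0 w
    exact closed_walk hclosed p ⟨0, Set.mem_Iio.mpr (by omega), rfl⟩
  -- cardinality: j' + 1 = n
  have himg : (Finset.range (j'+1)).image f = Finset.univ := by
    apply Finset.eq_univ_iff_forall.mpr
    intro w
    obtain ⟨k, hk, rfl⟩ := huniv w
    exact Finset.mem_image.mpr ⟨k, Finset.mem_range.mpr hk, rfl⟩
  have hjn : j' + 1 = m + 3 := by
    have h1 : ((Finset.range (j'+1)).image f).card = j' + 1 := by
      rw [Finset.card_image_of_injOn, Finset.card_range]
      intro a ha b hb hab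
      exact hinj a b (Finset.mem_range.mp ha) (Finset.mem_range.mp hb) hab
    rw [himg, Finset.card_univ, hcard] at h1
    omega
  obtain rfl : j' = m + 2 := by omega
  have hfn : f (m+3) = f 0 := hfij.symm
  -- adjacency characterization
  have hone : ((1 : Fin (m+3)) : ℕ) = 1 := by
    rw [Fin.val_one']
    exact Nat.mod_eq_of_lt (by omega)
  have hvaladd : ∀ a : Fin (m+3), ((a + 1 : Fin (m+3)) : ℕ) = (a.val + 1) % (m+3) := by
    intro a
    rw [Fin.val_add, hone]
  have keybwd : ∀ a : Fin (m+3), G.Adj (f a.val) (f ((a + 1 : Fin (m+3)) : ℕ)) := by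
    intro a
    rw [hvaladd]
    rcases Nat.lt_or_ge (a.val + 1) (m+3) with h | h
    · rw [Nat.mod_eq_of_lt h]; exact hadj a.val
    · have h2 : a.val + 1 = (m+3) := by have := a.isLt; omega
      have h3 : (a.val + 1) % (m+3) = 0 := by rw [h2, Nat.mod_self]
      have h4 : f (m+3) = f (a.val + 1) := by rw [h2]
      rw [h3, ← hfn, h4]
      exact hadj a.val
  have finext : ∀ a b : Fin (m+3), b.val = (a.val + 1) % (m+3) → b = a + 1 := by
    intro a b h
    apply Fin.ext
    rw [hvaladd]
    exact h
  have keyfwd : ∀ a b : Fin (m+3), G.Adj (f a) (f b) → b = a + 1 ∨ a = b + 1 := by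
    intro a b hab
    have hb := b.isLt
    have ha := a.isLt
    rcases Nat.eq_zero_or_pos a.val with ha0 | hapos
    · rw [ha0] at hab
      have hc' : G.Adj (f (m+3)) (f b) := by rw [hfn]; exact hab
      by_cases h : (f b : V) = f (m+2)
      · right
        have hbv : b.val = m + 2 := hinj b.val (m+2) hb (by omega) h
        apply finext
        rw [ha0, hbv, Nat.mod_self]
      · left
        have h2 := huniq (m+2) (f b) hc' h
        rw [hfj1] at h2
        have hbv : b.val = 1 := hinj b.val 1 hb (by omega) h2
        apply finext
        rw [ha0, hbv, Nat.mod_eq_of_lt (by omega)]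
    · obtain ⟨k, hk⟩ : ∃ k, a.val = k + 1 := ⟨a.val - 1, by omega⟩
      rw [hk] at hab
      by_cases h : (f b : V) = f k
      · right
        have hbv : b.val = k := hinj b.val k hb (by omega) h
        apply finext
        rw [hk, hbv, Nat.mod_eq_of_lt (by omega)]
      · left
        have h2 := huniq k (f b) hab h
        rcases Nat.lt_or_ge (k+2) (m+3) with h3 | h3
        · have hbv : b.val = k + 2 := hinj b.val (k+2) hb h3 h2
          apply finext
          rw [hk, hbv, Nat.mod_eq_of_lt (by omega)]
        · have hk2 : k + 2 = m + 3 := by omega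
          rw [hk2, hfn] at h2
          have hbv : b.val = 0 := hinj b.val 0 hb (by omega) h2
          apply finext
          rw [hk, hbv, show k + 1 + 1 = m + 3 by omega, Nat.mod_self]
  -- build the isomorphism
  have hinjF : Function.Injective (fun k : Fin (m+3) => f k) := by
    intro a b h
    exact Fin.ext (hinj a.val b.val a.isLt b.isLt h)
  have hbij : Function.Bijective (fun k : Fin (m+3) => f k) :=
    (Fintype.bijective_iff_injective_and_card _).mpr ⟨hinjF, by simp [hcard]⟩
  refine ⟨(RelIso.mk (Equiv.ofBijective _ hbij) ?_).symm⟩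
  intro a b
  show G.Adj (f a) (f b) ↔ (cycleGraph (m+3)).Adj a b
  rw [SimpleGraph.cycleGraph_adj']
  constructor
  · intro h
    rcases keyfwd a b h with h' | h'
    · right
      rw [h', add_sub_cancel_left, hone]
    · left
      rw [h', add_sub_cancel_left, hone]
  · rintro (h' | h')
    · have hab : a = b + 1 := by
        have : a - b = 1 := by apply Fin.ext; rw [h', hone]
        rw [← this]; exact (add_sub_cancel _ _).symm
      rw [hab]; exact (keybwd b).symm
    · have hab : b = a + 1 := by
        have : b - a = 1 := by apply Fin.ext; rw [h', hone]
        rw [← this]; exact (add_sub_cancel _ _).symm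
      rw [hab]; exact keybwd a

noncomputable def wt (G : SimpleGraph V) : Sym2 V → ℝ :=
  Sym2.lift ⟨fun u v => 2 * Real.sqrt ((G.degree u : ℝ) * (G.degree v : ℝ))
        / ((G.degree u : ℝ) + (G.degree v : ℝ)),
      fun u v => by dsimp only; rw [mul_comm ((G.degree u : ℝ)), add_comm ((G.degree u : ℝ))]⟩

lemma deg_pos {G : SimpleGraph V} {u v : V} (h : G.Adj u v) : (0 : ℝ) < G.degree u := by
  have : 0 < G.degree u := (G.degree_pos_iff_exists_adj u).mpr ⟨v, h⟩
  exact_mod_cast this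

lemma wt_mk_le {G : SimpleGraph V} {u v : V} (h : G.Adj u v) : wt G s(u, v) ≤ 1 := by
  rw [wt, Sym2.lift_mk]
  exact term_le_one (deg_pos h) (deg_pos h.symm)

lemma wt_mk_eq_iff {G : SimpleGraph V} {u v : V} (h : G.Adj u v) :
    wt G s(u, v) = 1 ↔ G.degree u = G.degree v := by
  rw [wt, Sym2.lift_mk, term_eq_one_iff (deg_pos h) (deg_pos h.symm)]
  exact_mod_cast Iff.rfl

lemma regular_of_all_wt_one {G : SimpleGraph V} {n : ℕ}
    (hcard : Fintype.card V = n) (hn : 3 ≤ n) (hconn : G.Connected)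
    (hedges : G.edgeFinset.card = n)
    (hall : ∀ e ∈ G.edgeFinset, wt G e = 1) : ∀ v, G.degree v = 2 := by
  have hNe : Nonempty V := Fintype.card_pos_iff.mp (by omega)
  obtain ⟨v0⟩ := hNe
  have hdeg : ∀ u v : V, G.Adj u v → G.degree u = G.degree v := by
    intro u v h
    exact (wt_mk_eq_iff h).mp (hall s(u, v) (SimpleGraph.mem_edgeFinset.mpr h))
  have hconst : ∀ v, G.degree v = G.degree v0 := by
    intro v
    obtain ⟨p⟩ := hconn v0 v
    refine closed_walk (S := {w | G.degree w = G.degree v0}) ?_ p rfl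
    intro w hw c hc
    exact (hdeg w c hc).symm.trans hw
  have hsum : ∑ v : V, G.degree v = 2 * G.edgeFinset.card :=
    G.sum_degrees_eq_twice_card_edges
  rw [hedges] at hsum
  have hsum2 : ∑ v : V, G.degree v = Fintype.card V * G.degree v0 := by
    rw [Finset.sum_congr rfl (fun v _ => hconst v), Finset.sum_const, Finset.card_univ,
      smul_eq_mul]
  rw [hsum2, hcard] at hsum
  have hd : G.degree v0 = 2 := by
    have : n * G.degree v0 = 2 * n := hsum
    have hn0 : 0 < n := by omega
    nlinarith [this]
  intro v
  rw [hconst v, hd]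

lemma degree_eq_two_of_iso {G : SimpleGraph V} {n : ℕ} (hn : 3 ≤ n)
    (φ : G ≃g SimpleGraph.cycleGraph n) : ∀ v, G.degree v = 2 := by
  obtain ⟨m, rfl⟩ : ∃ m, n = m + 3 := ⟨n - 3, by omega⟩
  intro v
  rw [← card_neighborSet_eq_degree, Fintype.card_congr (φ.mapNeighborSet v),
    card_neighborSet_eq_degree, SimpleGraph.cycleGraph_degree_three_le]

end GAProof

theorem GA_unicyclic_upper {V : Type*} [Fintype V] (G : SimpleGraph V) (n : ℕ)
    (hcard : Fintype.card V = n) (hn : 3 ≤ n)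
    (hconn : G.Connected) (hedges : G.edgeFinset.card = n) :
    GA G ≤ n ∧ (GA G = n ↔ Nonempty (G ≃g SimpleGraph.cycleGraph n)) := by
  have hGA : GA G = ∑ e ∈ G.edgeFinset, GAProof.wt G e := rfl
  have hle : ∀ e ∈ G.edgeFinset, GAProof.wt G e ≤ 1 := by
    intro e he
    induction e using Sym2.ind with
    | _ u v => exact GAProof.wt_mk_le (SimpleGraph.mem_edgeFinset.mp he)
  have hsum1 : ∑ _e ∈ G.edgeFinset, (1 : ℝ) = n := by
    rw [Finset.sum_const, hedges]
    simp
  have hbound : GA G ≤ n := by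
    rw [hGA, ← hsum1]
    exact Finset.sum_le_sum hle
  refine ⟨hbound, ?_, ?_⟩
  · intro hGAn
    have hall : ∀ e ∈ G.edgeFinset, GAProof.wt G e = 1 := by
      have := (Finset.sum_eq_sum_iff_of_le hle).mp (by rw [← hGA, hsum1, hGAn])
      exact this
    exact GAProof.exists_iso_cycle G n hcard hn hconn
      (GAProof.regular_of_all_wt_one hcard hn hconn hedges hall)
  · rintro ⟨φ⟩
    have hreg := GAProof.degree_eq_two_of_iso hn φ
    have hall : ∀ e ∈ G.edgeFinset, GAProof.wt G e = 1 := by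
      intro e he
      induction e using Sym2.ind with
      | _ u v =>
        have h := SimpleGraph.mem_edgeFinset.mp he
        rw [GAProof.wt_mk_eq_iff h, hreg u, hreg v]
    rw [hGA, Finset.sum_congr rfl hall, hsum1]
end

section
/- For all non-negative integers p ≥ q ≥ 0 with n = p + q + 4 ≥ 5, GA(S_{n;3}) < GA(S_{p,q;4}), i.e. (n−3)·2√(n−1)/n + 4√2√(n−1)/(n+1) + 1 < p·2√(p+2)/(p+3) + 4√2√(p+2)/(p+4) + 4√2√(q+2)/(q+4) + q·2√(q+2)/(q+3). -/
lemma fmono' {x y : ℝ} (hx : 1 ≤ x) (hxy : x ≤ y) :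
    2*Real.sqrt y/(y+1) ≤ 2*Real.sqrt x/(x+1) := by
  have hy : 1 ≤ y := hx.trans hxy
  have hsx := Real.sqrt_nonneg x
  have hsy := Real.sqrt_nonneg y
  have hx2 : Real.sqrt x^2 = x := Real.sq_sqrt (by linarith)
  have hy2 : Real.sqrt y^2 = y := Real.sq_sqrt (by linarith)
  have h1 : 1 ≤ Real.sqrt x := by nlinarith
  have hxy' : Real.sqrt x ≤ Real.sqrt y := Real.sqrt_le_sqrt hxy
  rw [div_le_div_iff₀ (by linarith) (by linarith)]
  nlinarith [mul_nonneg (sub_nonneg.2 hxy') (by nlinarith : (0:ℝ) ≤ Real.sqrt x * Real.sqrt y - 1)]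

lemma gmono' {x y : ℝ} (hx : 2 ≤ x) (hxy : x ≤ y) :
    4*Real.sqrt 2*Real.sqrt y/(y+2) ≤ 4*Real.sqrt 2*Real.sqrt x/(x+2) := by
  have hy : 2 ≤ y := hx.trans hxy
  have hsx := Real.sqrt_nonneg x
  have hsy := Real.sqrt_nonneg y
  have hs2 := Real.sqrt_nonneg 2
  have hx2 : Real.sqrt x^2 = x := Real.sq_sqrt (by linarith)
  have hy2 : Real.sqrt y^2 = y := Real.sq_sqrt (by linarith)
  have hxy' : Real.sqrt x ≤ Real.sqrt y := Real.sqrt_le_sqrt hxy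
  have hprod : (2:ℝ) ≤ Real.sqrt x * Real.sqrt y := by nlinarith
  have e1 : Real.sqrt 2*Real.sqrt x*y = Real.sqrt 2*Real.sqrt x*(Real.sqrt y^2) := by rw [hy2]
  have e2 : Real.sqrt 2*Real.sqrt y*x = Real.sqrt 2*Real.sqrt y*(Real.sqrt x^2) := by rw [hx2]
  rw [div_le_div_iff₀ (by linarith) (by linarith)]
  nlinarith [mul_nonneg (mul_nonneg hs2 (sub_nonneg.2 hxy'))
    (by linarith : (0:ℝ) ≤ Real.sqrt x * Real.sqrt y - 2), e1, e2]

lemma flt1' {x : ℝ} (hx : 2 ≤ x) : 2*Real.sqrt x/(x+1) < 1 := by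
  have hsx := Real.sqrt_nonneg x
  have hx2 : Real.sqrt x^2 = x := Real.sq_sqrt (by linarith)
  rw [div_lt_one (by linarith)]
  nlinarith [sq_nonneg (Real.sqrt x - 1), sq_nonneg (Real.sqrt x - 2)]

set_option maxHeartbeats 1000000 in
lemma key' (c : ℝ) (hc : 1 ≤ c) :
    1 + (c+1)*(2*Real.sqrt (2*c+3))/(2*c+4)
      < c*(2*Real.sqrt (c+2))/(c+3) + 4*Real.sqrt 2*Real.sqrt (c+2)/(c+4) := by
  set a := Real.sqrt (c+2) with ha
  set s := Real.sqrt 2 with hs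
  have hap : 0 ≤ a := Real.sqrt_nonneg _
  have hsp : 0 ≤ s := Real.sqrt_nonneg _
  have ha2 : a^2 = c+2 := Real.sq_sqrt (by linarith)
  have hs2 : s^2 = 2 := Real.sq_sqrt (by norm_num)
  have ha1 : 1.73 ≤ a := by nlinarith [ha2, hap]
  have hs1 : 1.41 ≤ s := by nlinarith [hs2, hsp]
  have hs1' : s ≤ 1.415 := by nlinarith [hs2, hsp]
  have hb : Real.sqrt (2*c+3) ≤ s*a := by
    rw [show s*a = Real.sqrt (2*(c+2)) from (Real.sqrt_mul (by norm_num) _).symm]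
    exact Real.sqrt_le_sqrt (by linarith)
  have h1 : (c+1)*(2*Real.sqrt (2*c+3))/(2*c+4) ≤ (c+1)*(2*(s*a))/(2*c+4) := by
    gcongr
  have hnum : 0 < a*(4*c*(c+2)*(c+4)) - (s*a)*(2*(c+3)*(c^2+c-4)) - 2*(c+2)*(c+3)*(c+4) := by
    have hA : 1.73*(4*c*(c+2)*(c+4)) ≤ a*(4*c*(c+2)*(c+4)) :=
      mul_le_mul_of_nonneg_right ha1 (by positivity)
    rcases le_or_gt c 2 with hc2 | hc2
    · -- bounded region 1 ≤ c ≤ 2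
      have hta : (2.43:ℝ) ≤ s*a := by nlinarith [mul_le_mul hs1 ha1 (by norm_num) hsp]
      rcases le_or_gt (c^2+c-4) 0 with hBp | hBp
      · have hB : (s*a)*(2*(c+3)*(c^2+c-4)) ≤ 2.43*(2*(c+3)*(c^2+c-4)) :=
          mul_le_mul_of_nonpos_right hta (by nlinarith)
        nlinarith [mul_nonneg (sub_nonneg.2 hc) (sub_nonneg.2 hc2),
          sq_nonneg (c-1), sq_nonneg (2-c),
          mul_nonneg (mul_nonneg (sub_nonneg.2 hc) (sub_nonneg.2 hc2)) (sub_nonneg.2 hc)]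
      · have hsa' : s*a ≤ 2.83 := by
          nlinarith [mul_le_mul hs1' (by nlinarith [ha2, hap] : a ≤ 2) hap (by norm_num)]
        have hB : (s*a)*(2*(c+3)*(c^2+c-4)) ≤ 2.83*(2*(c+3)*(c^2+c-4)) :=
          mul_le_mul_of_nonneg_right hsa' (by nlinarith)
        nlinarith [mul_nonneg (sub_nonneg.2 hc) (sub_nonneg.2 hc2),
          sq_nonneg (c-1), sq_nonneg (2-c),
          mul_nonneg (mul_nonneg (sub_nonneg.2 hc) (sub_nonneg.2 hc2)) (sub_nonneg.2 hc)]
    · -- c ≥ 2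
      have hB : (0:ℝ) ≤ c^2 + c - 4 := by nlinarith [sq_nonneg (c-2)]
      have haa : (2:ℝ) ≤ a := by nlinarith [ha2, hap]
      have hE : (c+2)*(c+3)*(c+4) < 4*c*(c+2)*(c+4) - s*(2*(c+3)*(c^2+c-4)) := by
        nlinarith [mul_nonneg (sub_nonneg.2 hs1') (mul_nonneg (by linarith : (0:ℝ) ≤ 2*(c+3)) hB),
          mul_pos (mul_pos (by linarith : (0:ℝ) < c) (by linarith : (0:ℝ) < c)) (by linarith : (0:ℝ) < c)]
      have hE0 : (0:ℝ) ≤ 4*c*(c+2)*(c+4) - s*(2*(c+3)*(c^2+c-4)) := by nlinarith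
      have hmul := mul_le_mul_of_nonneg_right haa hE0
      linarith [hmul]
  have hden : (0:ℝ) < (c+3)*((c+4)*(2*c+4)) := by positivity
  have hdiff : c*(2*a)/(c+3) + 4*s*a/(c+4) - (1 + (c+1)*(2*(s*a))/(2*c+4))
      = (a*(4*c*(c+2)*(c+4)) - (s*a)*(2*(c+3)*(c^2+c-4)) - 2*(c+2)*(c+3)*(c+4))
          / ((c+3)*((c+4)*(2*c+4))) := by
    field_simp
    ring
  have hfin := div_pos hnum hden
  rw [← hdiff] at hfin
  linarith

lemma main_real (x y : ℝ) (hy : 0 ≤ y) (hyx : y ≤ x) (hxy1 : 1 ≤ x + y)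
    (hq : y = 0 ∨ 1 ≤ y) :
    (x+y+4-3) * (2 * Real.sqrt (x+y+4-1)) / (x+y+4)
      + 4 * Real.sqrt 2 * Real.sqrt (x+y+4-1) / (x+y+4+1) + 1
    < x * (2 * Real.sqrt (x+2)) / (x+3)
      + 4 * Real.sqrt 2 * Real.sqrt (x+2) / (x+4)
      + 4 * Real.sqrt 2 * Real.sqrt (y+2) / (y+4)
      + y * (2 * Real.sqrt (y+2)) / (y+3) := by
  have hx0 : 0 ≤ x := hy.trans hyx
  rw [show x+y+4-3 = x+y+1 by ring, show x+y+4-1 = x+y+3 by ring]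
  have hfm : 2*Real.sqrt (x+y+3)/((x+y+3)+1) ≤ 2*Real.sqrt (x+2)/((x+2)+1) :=
    fmono' (by linarith) (by linarith)
  have hA : x*(2*Real.sqrt (x+y+3)/((x+y+3)+1)) ≤ x*(2*Real.sqrt (x+2)/((x+2)+1)) :=
    mul_le_mul_of_nonneg_left hfm hx0
  have hB : 4*Real.sqrt 2*Real.sqrt (x+y+3)/((x+y+3)+2) ≤ 4*Real.sqrt 2*Real.sqrt (x+2)/((x+2)+2) :=
    gmono' (by linarith) (by linarith)
  rcases hq with h0 | h1
  · -- y = 0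
    subst h0
    have hE : 2*Real.sqrt (x+0+3)/((x+0+3)+1) < 1 := flt1' (by linarith)
    have hF : Real.sqrt 2^2 = 2 := Real.sq_sqrt (by norm_num)
    ring_nf at hA hB hE ⊢
    nlinarith [hA, hB, hE, hF]
  · -- 1 ≤ y
    have hC : (y+1)*(2*Real.sqrt (x+y+3)/((x+y+3)+1)) ≤ (y+1)*(2*Real.sqrt (2*y+3)/((2*y+3)+1)) :=
      mul_le_mul_of_nonneg_left (fmono' (by linarith) (by linarith)) (by linarith)
    have hD := key' y h1
    ring_nf at hA hB hC hD ⊢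
    linarith [hA, hB, hC, hD]

theorem GA_Sn3_lt_GA_Spq4 (p q n : ℕ) (hpq : q ≤ p) (hn : n = p + q + 4) (hn5 : 5 ≤ n) :
    ((n : ℝ) - 3) * (2 * Real.sqrt ((n : ℝ) - 1)) / n
      + 4 * Real.sqrt 2 * Real.sqrt ((n : ℝ) - 1) / (n + 1) + 1
    < (p : ℝ) * (2 * Real.sqrt ((p : ℝ) + 2)) / (p + 3)
      + 4 * Real.sqrt 2 * Real.sqrt ((p : ℝ) + 2) / (p + 4)
      + 4 * Real.sqrt 2 * Real.sqrt ((q : ℝ) + 2) / (q + 4)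
      + (q : ℝ) * (2 * Real.sqrt ((q : ℝ) + 2)) / (q + 3) := by
  have hcast : (n:ℝ) = (p:ℝ) + (q:ℝ) + 4 := by rw [hn]; push_cast; ring
  rw [hcast]
  apply main_real
  · exact_mod_cast Nat.zero_le q
  · exact_mod_cast hpq
  · have : 1 ≤ p + q := by omega
    exact_mod_cast this
  · rcases Nat.eq_zero_or_pos q with h | h
    · left; exact_mod_cast h
    · right; exact_mod_cast h
end

section
/- For all positive integers r ≥ k ≥ 1 with n = r + k + 3, GA(S_{n;3}) < GA(S_{r,k;3}), where GA(S_{r,k;3}) = r·2√(r+2)/(r+3) + 2√2√(r+2)/(r+4) + 2√2√(k+2)/(k+4) + k·2√(k+2)/(k+3) + 2√((r+2)(k+2))/(r+k+4) and GA(S_{n;3}) = (n−3)·2√(n−1)/n + 4√2√(n−1)/(n+1) + 1. -/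
lemma sqrtmono_g {t u : ℝ} (ht : 1 ≤ t) (htu : t ≤ u) :
    2 * Real.sqrt u / (u + 1) ≤ 2 * Real.sqrt t / (t + 1) := by
  have h0 : (0:ℝ) < t + 1 := by linarith
  have h1 : (0:ℝ) < u + 1 := by linarith
  rw [div_le_div_iff₀ h1 h0]
  have key : Real.sqrt u * (t + 1) ≤ Real.sqrt t * (u + 1) := by
    have e1 : Real.sqrt u * (t + 1) = Real.sqrt (u * (t + 1) ^ 2) := by
      rw [Real.sqrt_mul (by linarith : (0:ℝ) ≤ u), Real.sqrt_sq (by linarith)]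
    have e2 : Real.sqrt t * (u + 1) = Real.sqrt (t * (u + 1) ^ 2) := by
      rw [Real.sqrt_mul (by linarith : (0:ℝ) ≤ t), Real.sqrt_sq (by linarith)]
    rw [e1, e2]
    apply Real.sqrt_le_sqrt
    nlinarith [mul_nonneg (sub_nonneg.2 htu) (by nlinarith : (0:ℝ) ≤ t * u - 1)]
  nlinarith [key]

lemma sqrtmono_g2 {t u : ℝ} (ht : 2 ≤ t) (htu : t ≤ u) :
    Real.sqrt u / (u + 2) ≤ Real.sqrt t / (t + 2) := by
  have h0 : (0:ℝ) < t + 2 := by linarith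
  have h1 : (0:ℝ) < u + 2 := by linarith
  rw [div_le_div_iff₀ h1 h0]
  have e1 : Real.sqrt u * (t + 2) = Real.sqrt (u * (t + 2) ^ 2) := by
    rw [Real.sqrt_mul (by linarith : (0:ℝ) ≤ u), Real.sqrt_sq (by linarith)]
  have e2 : Real.sqrt t * (u + 2) = Real.sqrt (t * (u + 2) ^ 2) := by
    rw [Real.sqrt_mul (by linarith : (0:ℝ) ≤ t), Real.sqrt_sq (by linarith)]
  rw [e1, e2]
  apply Real.sqrt_le_sqrt
  nlinarith [mul_nonneg (sub_nonneg.2 htu) (by nlinarith : (0:ℝ) ≤ t * u - 4)]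

lemma bnd1 {m : ℝ} (hm : 0 ≤ m) :
    2 * Real.sqrt m / (m + 1) ≤ 2 / Real.sqrt (m + 2) := by
  have hq : 0 < Real.sqrt (m + 2) := Real.sqrt_pos.2 (by linarith)
  rw [div_le_div_iff₀ (by linarith) hq]
  have e1 : Real.sqrt m * Real.sqrt (m + 2) = Real.sqrt (m * (m + 2)) :=
    (Real.sqrt_mul hm _).symm
  have e2 : Real.sqrt (m * (m + 2)) ≤ m + 1 := by
    rw [show m + 1 = Real.sqrt ((m + 1) ^ 2) by rw [Real.sqrt_sq (by linarith)]]
    apply Real.sqrt_le_sqrt; nlinarith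
  calc 2 * Real.sqrt m * Real.sqrt (m + 2) = 2 * (Real.sqrt m * Real.sqrt (m + 2)) := by ring
    _ = 2 * Real.sqrt (m * (m + 2)) := by rw [e1]
    _ ≤ 2 * (m + 1) := by linarith

lemma polyF {b s : ℝ} (hb : 2 ≤ b) (hs : s = Real.sqrt 2) :
    (2 * (b ^ 2 - 2) + 2 * s - s * b) / (s * b) + 1
      < 2 * s * b / (b ^ 2 - 2 + 4) + 2 * (b ^ 2 - 2) * b / (b ^ 2 - 2 + 3) := by
  have hs2 : s ^ 2 = 2 := by rw [hs]; exact Real.sq_sqrt (by norm_num)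
  have hs0 : 0 < s := by rw [hs]; positivity
  have hsl : 1.414 ≤ s := by nlinarith
  have hsu : s ≤ 1.41422 := by nlinarith
  have hb0 : 0 < b := by linarith
  have h1 : (0:ℝ) < b ^ 2 - 2 + 4 := by nlinarith
  have h2 : (0:ℝ) < b ^ 2 - 2 + 3 := by nlinarith
  have hsb : 0 < s * b := by positivity
  rw [div_add' _ _ _ (ne_of_gt hsb), div_lt_iff₀ hsb]
  rw [div_add_div _ _ (ne_of_gt h1) (ne_of_gt h2), div_mul_eq_mul_div, lt_div_iff₀ (by positivity)]
  ring_nf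
  have hb2 : (4:ℝ) ≤ b ^ 2 := by nlinarith
  have h4 : 4 * b ^ 2 ≤ b ^ 4 := by nlinarith [mul_nonneg (sq_nonneg b) (sub_nonneg.2 hb2)]
  have h6 : 4 * b ^ 4 ≤ b ^ 6 := by nlinarith [mul_nonneg (mul_nonneg (sq_nonneg b) (sq_nonneg b)) (sub_nonneg.2 hb2)]
  have h2' : (0:ℝ) ≤ b ^ 6 - b ^ 4 - 12 * b ^ 2 := by linarith
  nlinarith [mul_nonneg (sub_nonneg.2 hsl) h2', hb2, h2']

lemma sqle_of_sq_le_sq {x y : ℝ} (h : x ^ 2 ≤ y ^ 2) (hx : 0 ≤ x) (hy : 0 ≤ y) : x ≤ y := by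
  rw [← Real.sqrt_sq hx, ← Real.sqrt_sq hy]; exact Real.sqrt_le_sqrt h

set_option maxHeartbeats 4000000 in
theorem GA_Sn3_lt_GA_Srk3 (r k n : ℕ) (hk : 1 ≤ k) (hrk : k ≤ r) (hn : n = r + k + 3) :
    ((n : ℝ) - 3) * (2 * Real.sqrt ((n : ℝ) - 1)) / n
      + 4 * Real.sqrt 2 * Real.sqrt ((n : ℝ) - 1) / (n + 1) + 1
    < (r : ℝ) * (2 * Real.sqrt ((r : ℝ) + 2)) / (r + 3)
      + 2 * Real.sqrt 2 * Real.sqrt ((r : ℝ) + 2) / (r + 4)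
      + 2 * Real.sqrt 2 * Real.sqrt ((k : ℝ) + 2) / (k + 4)
      + (k : ℝ) * (2 * Real.sqrt ((k : ℝ) + 2)) / (k + 3)
      + 2 * Real.sqrt (((r : ℝ) + 2) * ((k : ℝ) + 2)) / (r + k + 4) := by
  have hkR : (1:ℝ) ≤ (k:ℝ) := by exact_mod_cast hk
  have hrkR : (k:ℝ) ≤ (r:ℝ) := by exact_mod_cast hrk
  have hrR : (1:ℝ) ≤ (r:ℝ) := le_trans hkR hrkR
  subst hn
  push_cast
  rw [show (r:ℝ) + (k:ℝ) + 3 - 3 = (r:ℝ) + (k:ℝ) by ring,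
      show (r:ℝ) + (k:ℝ) + 3 - 1 = (r:ℝ) + (k:ℝ) + 2 by ring,
      show (r:ℝ) + (k:ℝ) + 3 + 1 = (r:ℝ) + (k:ℝ) + 4 by ring,
      Real.sqrt_mul (by positivity : (0:ℝ) ≤ (r:ℝ) + 2)]
  have hS0 : (0:ℝ) ≤ Real.sqrt 2 := Real.sqrt_nonneg _
  have hA0 : (0:ℝ) ≤ Real.sqrt ((r:ℝ) + 2) := Real.sqrt_nonneg _
  have hB0 : (0:ℝ) ≤ Real.sqrt ((k:ℝ) + 2) := Real.sqrt_nonneg _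
  have hC0 : (0:ℝ) ≤ Real.sqrt ((r:ℝ) + (k:ℝ) + 2) := Real.sqrt_nonneg _
  have hQ0 : (0:ℝ) ≤ Real.sqrt ((r:ℝ) + (k:ℝ) + 4) := Real.sqrt_nonneg _
  have hS2 : (Real.sqrt 2) ^ 2 = 2 := Real.sq_sqrt (by norm_num)
  have hA2 : (Real.sqrt ((r:ℝ) + 2)) ^ 2 = (r:ℝ) + 2 := Real.sq_sqrt (by linarith)
  have hB2 : (Real.sqrt ((k:ℝ) + 2)) ^ 2 = (k:ℝ) + 2 := Real.sq_sqrt (by linarith)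
  have hQ2 : (Real.sqrt ((r:ℝ) + (k:ℝ) + 4)) ^ 2 = (r:ℝ) + (k:ℝ) + 4 := Real.sq_sqrt (by linarith)
  have hQpos : (0:ℝ) < Real.sqrt ((r:ℝ) + (k:ℝ) + 4) := Real.sqrt_pos.2 (by linarith)
  have hSpos : (0:ℝ) < Real.sqrt 2 := Real.sqrt_pos.2 (by norm_num)
  have hBpos : (0:ℝ) < Real.sqrt ((k:ℝ) + 2) := Real.sqrt_pos.2 (by linarith)
  have t1 : (r:ℝ) * (2 * Real.sqrt ((r:ℝ) + (k:ℝ) + 2)) / ((r:ℝ) + (k:ℝ) + 3) ≤ (r:ℝ) * (2 * Real.sqrt ((r:ℝ) + 2)) / ((r:ℝ) + 3) := by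
    have f1 := sqrtmono_g (t := (r:ℝ) + 2) (u := (r:ℝ) + (k:ℝ) + 2) (by linarith) (by linarith)
    rw [show (r:ℝ) + (k:ℝ) + 2 + 1 = (r:ℝ) + (k:ℝ) + 3 by ring,
        show (r:ℝ) + 2 + 1 = (r:ℝ) + 3 by ring] at f1
    calc (r:ℝ) * (2 * Real.sqrt ((r:ℝ) + (k:ℝ) + 2)) / ((r:ℝ) + (k:ℝ) + 3)
        = (r:ℝ) * (2 * Real.sqrt ((r:ℝ) + (k:ℝ) + 2) / ((r:ℝ) + (k:ℝ) + 3)) := by ring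
      _ ≤ (r:ℝ) * (2 * Real.sqrt ((r:ℝ) + 2) / ((r:ℝ) + 3)) := mul_le_mul_of_nonneg_left f1 (Nat.cast_nonneg r)
      _ = (r:ℝ) * (2 * Real.sqrt ((r:ℝ) + 2)) / ((r:ℝ) + 3) := by ring
  have t3 : 2 * Real.sqrt 2 * Real.sqrt ((r:ℝ) + (k:ℝ) + 2) / ((r:ℝ) + (k:ℝ) + 4) ≤ 2 * Real.sqrt 2 * Real.sqrt ((r:ℝ) + 2) / ((r:ℝ) + 4) := by
    have f2 := sqrtmono_g2 (t := (r:ℝ) + 2) (u := (r:ℝ) + (k:ℝ) + 2) (by linarith) (by linarith)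
    rw [show (r:ℝ) + (k:ℝ) + 2 + 2 = (r:ℝ) + (k:ℝ) + 4 by ring,
        show (r:ℝ) + 2 + 2 = (r:ℝ) + 4 by ring] at f2
    calc 2 * Real.sqrt 2 * Real.sqrt ((r:ℝ) + (k:ℝ) + 2) / ((r:ℝ) + (k:ℝ) + 4)
        = (2 * Real.sqrt 2) * (Real.sqrt ((r:ℝ) + (k:ℝ) + 2) / ((r:ℝ) + (k:ℝ) + 4)) := by ring
      _ ≤ (2 * Real.sqrt 2) * (Real.sqrt ((r:ℝ) + 2) / ((r:ℝ) + 4)) := mul_le_mul_of_nonneg_left f2 (by positivity)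
      _ = 2 * Real.sqrt 2 * Real.sqrt ((r:ℝ) + 2) / ((r:ℝ) + 4) := by ring
  have key : (k:ℝ) * (2 * Real.sqrt ((r:ℝ) + (k:ℝ) + 2)) / ((r:ℝ) + (k:ℝ) + 3) + 2 * Real.sqrt 2 * Real.sqrt ((r:ℝ) + (k:ℝ) + 2) / ((r:ℝ) + (k:ℝ) + 4) + 1
      < 2 * Real.sqrt 2 * Real.sqrt ((k:ℝ) + 2) / ((k:ℝ) + 4) + (k:ℝ) * (2 * Real.sqrt ((k:ℝ) + 2)) / ((k:ℝ) + 3)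
        + 2 * (Real.sqrt ((r:ℝ) + 2) * Real.sqrt ((k:ℝ) + 2)) / ((r:ℝ) + (k:ℝ) + 4) := by
    have hQQ : Real.sqrt ((r:ℝ) + (k:ℝ) + 4) * Real.sqrt ((r:ℝ) + (k:ℝ) + 4) = (r:ℝ) + (k:ℝ) + 4 := by
      exact Real.mul_self_sqrt (by linarith)
    have reduce : (2 * (k:ℝ) + 2 * Real.sqrt 2 - Real.sqrt 2 * Real.sqrt ((k:ℝ) + 2)) / Real.sqrt ((r:ℝ) + (k:ℝ) + 4) + 1
          < 2 * Real.sqrt 2 * Real.sqrt ((k:ℝ) + 2) / ((k:ℝ) + 4) + (k:ℝ) * (2 * Real.sqrt ((k:ℝ) + 2)) / ((k:ℝ) + 3) →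
        (k:ℝ) * (2 * Real.sqrt ((r:ℝ) + (k:ℝ) + 2)) / ((r:ℝ) + (k:ℝ) + 3) + 2 * Real.sqrt 2 * Real.sqrt ((r:ℝ) + (k:ℝ) + 2) / ((r:ℝ) + (k:ℝ) + 4) + 1
          < 2 * Real.sqrt 2 * Real.sqrt ((k:ℝ) + 2) / ((k:ℝ) + 4) + (k:ℝ) * (2 * Real.sqrt ((k:ℝ) + 2)) / ((k:ℝ) + 3)
            + 2 * (Real.sqrt ((r:ℝ) + 2) * Real.sqrt ((k:ℝ) + 2)) / ((r:ℝ) + (k:ℝ) + 4) := by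
      intro key2
      have hb1 : (k:ℝ) * (2 * Real.sqrt ((r:ℝ) + (k:ℝ) + 2)) / ((r:ℝ) + (k:ℝ) + 3) ≤ (k:ℝ) * (2 / Real.sqrt ((r:ℝ) + (k:ℝ) + 4)) := by
        have h := bnd1 (m := (r:ℝ) + (k:ℝ) + 2) (by linarith)
        rw [show (r:ℝ) + (k:ℝ) + 2 + 1 = (r:ℝ) + (k:ℝ) + 3 by ring,
            show (r:ℝ) + (k:ℝ) + 2 + 2 = (r:ℝ) + (k:ℝ) + 4 by ring] at h
        calc (k:ℝ) * (2 * Real.sqrt ((r:ℝ) + (k:ℝ) + 2)) / ((r:ℝ) + (k:ℝ) + 3)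
            = (k:ℝ) * (2 * Real.sqrt ((r:ℝ) + (k:ℝ) + 2) / ((r:ℝ) + (k:ℝ) + 3)) := by ring
          _ ≤ (k:ℝ) * (2 / Real.sqrt ((r:ℝ) + (k:ℝ) + 4)) := mul_le_mul_of_nonneg_left h (Nat.cast_nonneg k)
      have hCQ : Real.sqrt ((r:ℝ) + (k:ℝ) + 2) ≤ Real.sqrt ((r:ℝ) + (k:ℝ) + 4) := Real.sqrt_le_sqrt (by linarith)
      have hb2 : 2 * Real.sqrt 2 * Real.sqrt ((r:ℝ) + (k:ℝ) + 2) / ((r:ℝ) + (k:ℝ) + 4) ≤ 2 * Real.sqrt 2 / Real.sqrt ((r:ℝ) + (k:ℝ) + 4) := by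
        rw [div_le_div_iff₀ (by linarith : (0:ℝ) < (r:ℝ) + (k:ℝ) + 4) hQpos]
        nlinarith [mul_le_mul_of_nonneg_right hCQ hQ0, hQQ, hS0]
      have h2a : Real.sqrt 2 * Real.sqrt ((r:ℝ) + (k:ℝ) + 4) ≤ 2 * Real.sqrt ((r:ℝ) + 2) := by
        have hsq : (Real.sqrt 2 * Real.sqrt ((r:ℝ) + (k:ℝ) + 4)) ^ 2 ≤ (2 * Real.sqrt ((r:ℝ) + 2)) ^ 2 := by
          rw [mul_pow, mul_pow, hS2, hQ2, hA2]; nlinarith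
        exact sqle_of_sq_le_sq hsq (mul_nonneg hS0 hQ0) (by positivity)
      have hb3 : Real.sqrt 2 * Real.sqrt ((k:ℝ) + 2) / Real.sqrt ((r:ℝ) + (k:ℝ) + 4) ≤ 2 * (Real.sqrt ((r:ℝ) + 2) * Real.sqrt ((k:ℝ) + 2)) / ((r:ℝ) + (k:ℝ) + 4) := by
        rw [div_le_div_iff₀ hQpos (by linarith : (0:ℝ) < (r:ℝ) + (k:ℝ) + 4)]
        have hSBQ2 : Real.sqrt 2 * Real.sqrt ((r:ℝ) + (k:ℝ) + 4) * (Real.sqrt ((k:ℝ) + 2) * Real.sqrt ((r:ℝ) + (k:ℝ) + 4)) = Real.sqrt 2 * Real.sqrt ((k:ℝ) + 2) * ((r:ℝ) + (k:ℝ) + 4) := by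
          rw [show Real.sqrt 2 * Real.sqrt ((r:ℝ) + (k:ℝ) + 4) * (Real.sqrt ((k:ℝ) + 2) * Real.sqrt ((r:ℝ) + (k:ℝ) + 4)) = Real.sqrt 2 * Real.sqrt ((k:ℝ) + 2) * (Real.sqrt ((r:ℝ) + (k:ℝ) + 4) * Real.sqrt ((r:ℝ) + (k:ℝ) + 4)) by ring, hQQ]
        nlinarith [mul_le_mul_of_nonneg_right h2a (mul_nonneg hB0 hQ0), hSBQ2]
      have hid : (k:ℝ) * (2 / Real.sqrt ((r:ℝ) + (k:ℝ) + 4)) + 2 * Real.sqrt 2 / Real.sqrt ((r:ℝ) + (k:ℝ) + 4)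
          = (2 * (k:ℝ) + 2 * Real.sqrt 2 - Real.sqrt 2 * Real.sqrt ((k:ℝ) + 2)) / Real.sqrt ((r:ℝ) + (k:ℝ) + 4) + Real.sqrt 2 * Real.sqrt ((k:ℝ) + 2) / Real.sqrt ((r:ℝ) + (k:ℝ) + 4) := by ring
      linarith [hb1, hb2, hb3, key2, hid]
    have hSleB : Real.sqrt 2 ≤ Real.sqrt ((k:ℝ) + 2) := Real.sqrt_le_sqrt (by linarith)
    have hnum : (0:ℝ) ≤ 2 * (k:ℝ) + 2 * Real.sqrt 2 - Real.sqrt 2 * Real.sqrt ((k:ℝ) + 2) := by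
      have h1 : Real.sqrt 2 * Real.sqrt ((k:ℝ) + 2) ≤ Real.sqrt ((k:ℝ) + 2) * Real.sqrt ((k:ℝ) + 2) := mul_le_mul_of_nonneg_right hSleB hB0
      have h2 : Real.sqrt ((k:ℝ) + 2) * Real.sqrt ((k:ℝ) + 2) = (k:ℝ) + 2 := by nlinarith [hB2]
      have h3 : (1:ℝ) ≤ Real.sqrt 2 := by nlinarith [hS2, hS0]
      nlinarith
    rcases eq_or_lt_of_le hk with hk1 | hk2
    · -- k = 1
      have hSl : (1.4142:ℝ) ≤ Real.sqrt 2 := by nlinarith [hS2, hS0]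
      have hSu : Real.sqrt 2 ≤ (1.4143:ℝ) := by nlinarith [hS2, hS0]
      have hk1' : k = 1 := hk1.symm
      rcases Nat.lt_or_ge r 4 with hr4 | hr4
      · -- r ∈ {1, 2, 3} : prove key directly
        subst hk1'
        clear reduce hnum hB2 hB0 hBpos hSleB hkR
        interval_cases r
        · -- r = 1
          have h4 : Real.sqrt 4 = 2 := by
            rw [show (4:ℝ) = 2 ^ 2 by norm_num, Real.sqrt_sq (by norm_num : (0:ℝ) ≤ 2)]
          have h3sq : Real.sqrt 3 ^ 2 = 3 := Real.sq_sqrt (by norm_num)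
          have h30 : (0:ℝ) ≤ Real.sqrt 3 := Real.sqrt_nonneg 3
          have h3l : (1.7320:ℝ) ≤ Real.sqrt 3 := by nlinarith
          have h3u : Real.sqrt 3 ≤ 1.7321 := by nlinarith
          have p23 : (2.4494:ℝ) ≤ Real.sqrt 2 * Real.sqrt 3 := by nlinarith [hSl, h3l]
          push_cast
          norm_num
          linarith [hSl, hSu, h3l, h3u, p23]
        · -- r = 2
          have h4 : Real.sqrt 4 = 2 := by
            rw [show (4:ℝ) = 2 ^ 2 by norm_num, Real.sqrt_sq (by norm_num : (0:ℝ) ≤ 2)]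
          have h3sq : Real.sqrt 3 ^ 2 = 3 := Real.sq_sqrt (by norm_num)
          have h30 : (0:ℝ) ≤ Real.sqrt 3 := Real.sqrt_nonneg 3
          have h3l : (1.7320:ℝ) ≤ Real.sqrt 3 := by nlinarith
          have h3u : Real.sqrt 3 ≤ 1.7321 := by nlinarith
          have h5sq : Real.sqrt 5 ^ 2 = 5 := Real.sq_sqrt (by norm_num)
          have h50 : (0:ℝ) ≤ Real.sqrt 5 := Real.sqrt_nonneg 5
          have h5l : (2.2360:ℝ) ≤ Real.sqrt 5 := by nlinarith
          have h5u : Real.sqrt 5 ≤ 2.2361 := by nlinarith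
          have p23 : (2.4494:ℝ) ≤ Real.sqrt 2 * Real.sqrt 3 := by nlinarith [hSl, h3l]
          have p25 : Real.sqrt 2 * Real.sqrt 5 ≤ 3.1626 := by
            nlinarith [hSu, h5u, Real.sqrt_nonneg 2, Real.sqrt_nonneg 5]
          push_cast
          norm_num
          linarith [hSl, hSu, h3l, h3u, h5l, h5u, p23, p25]
        · -- r = 3
          have h3sq : Real.sqrt 3 ^ 2 = 3 := Real.sq_sqrt (by norm_num)
          have h30 : (0:ℝ) ≤ Real.sqrt 3 := Real.sqrt_nonneg 3
          have h3l : (1.7320:ℝ) ≤ Real.sqrt 3 := by nlinarith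
          have h3u : Real.sqrt 3 ≤ 1.7321 := by nlinarith
          have h5sq : Real.sqrt 5 ^ 2 = 5 := Real.sq_sqrt (by norm_num)
          have h50 : (0:ℝ) ≤ Real.sqrt 5 := Real.sqrt_nonneg 5
          have h5l : (2.2360:ℝ) ≤ Real.sqrt 5 := by nlinarith
          have h5u : Real.sqrt 5 ≤ 2.2361 := by nlinarith
          have h6sq : Real.sqrt 6 ^ 2 = 6 := Real.sq_sqrt (by norm_num)
          have h60 : (0:ℝ) ≤ Real.sqrt 6 := Real.sqrt_nonneg 6
          have h6l : (2.4494:ℝ) ≤ Real.sqrt 6 := by nlinarith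
          have h6u : Real.sqrt 6 ≤ 2.4495 := by nlinarith
          have p23 : (2.4494:ℝ) ≤ Real.sqrt 2 * Real.sqrt 3 := by nlinarith [hSl, h3l]
          have p26 : Real.sqrt 2 * Real.sqrt 6 ≤ 3.4645 := by
            nlinarith [hSu, h6u, Real.sqrt_nonneg 2, Real.sqrt_nonneg 6]
          have p53 : (3.8727:ℝ) ≤ Real.sqrt 5 * Real.sqrt 3 := by nlinarith [h5l, h3l]
          push_cast
          norm_num
          linarith [hSl, hSu, h3l, h3u, h6l, h6u, p23, p26, p53]
      · -- r ≥ 4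
        apply reduce
        have hk1R : (k:ℝ) = 1 := by exact_mod_cast hk1.symm
        have hr4R : (4:ℝ) ≤ (r:ℝ) := by exact_mod_cast hr4
        have hQ3 : (3:ℝ) ≤ Real.sqrt ((r:ℝ) + (k:ℝ) + 4) := by nlinarith [hQ2, hQ0]
        have hB3 : (Real.sqrt ((k:ℝ) + 2)) ^ 2 = 3 := by rw [hB2, hk1R]; norm_num
        have hBl : (1.7320:ℝ) ≤ Real.sqrt ((k:ℝ) + 2) := by nlinarith [hB3, hB0]
        have hBu : Real.sqrt ((k:ℝ) + 2) ≤ (1.7321:ℝ) := by nlinarith [hB3, hB0]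
        have hPl : (2.4494:ℝ) ≤ Real.sqrt 2 * Real.sqrt ((k:ℝ) + 2) := by nlinarith [hSl, hBl]
        have hPu : Real.sqrt 2 * Real.sqrt ((k:ℝ) + 2) ≤ (2.4498:ℝ) := by nlinarith [hSu, hBu, hS0, hB0]
        have hmono : (2 * (k:ℝ) + 2 * Real.sqrt 2 - Real.sqrt 2 * Real.sqrt ((k:ℝ) + 2)) / Real.sqrt ((r:ℝ) + (k:ℝ) + 4)
            ≤ (2 * (k:ℝ) + 2 * Real.sqrt 2 - Real.sqrt 2 * Real.sqrt ((k:ℝ) + 2)) / 3 :=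
          div_le_div_of_nonneg_left hnum (by norm_num) hQ3
        calc (2 * (k:ℝ) + 2 * Real.sqrt 2 - Real.sqrt 2 * Real.sqrt ((k:ℝ) + 2)) / Real.sqrt ((r:ℝ) + (k:ℝ) + 4) + 1
            ≤ (2 * (k:ℝ) + 2 * Real.sqrt 2 - Real.sqrt 2 * Real.sqrt ((k:ℝ) + 2)) / 3 + 1 := add_le_add_left hmono 1
          _ < 2 * Real.sqrt 2 * Real.sqrt ((k:ℝ) + 2) / ((k:ℝ) + 4) + (k:ℝ) * (2 * Real.sqrt ((k:ℝ) + 2)) / ((k:ℝ) + 3) := by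
              rw [hk1R] at hBl hBu hPl hPu ⊢
              rw [show (1:ℝ) + 4 = 5 by norm_num, show (1:ℝ) + 3 = 4 by norm_num]
              linarith [hSl, hSu, hBl, hBu, hPl, hPu]
    · -- k ≥ 2
      apply reduce
      have hk2R : (2:ℝ) ≤ (k:ℝ) := by exact_mod_cast hk2
      have hSBQ : Real.sqrt 2 * Real.sqrt ((k:ℝ) + 2) ≤ Real.sqrt ((r:ℝ) + (k:ℝ) + 4) := by
        have hsq : (Real.sqrt 2 * Real.sqrt ((k:ℝ) + 2)) ^ 2 ≤ (Real.sqrt ((r:ℝ) + (k:ℝ) + 4)) ^ 2 := by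
          rw [mul_pow, hS2, hB2, hQ2]; nlinarith
        exact sqle_of_sq_le_sq hsq (mul_nonneg hS0 hB0) hQ0
      have hSBpos : (0:ℝ) < Real.sqrt 2 * Real.sqrt ((k:ℝ) + 2) := by positivity
      have hmono : (2 * (k:ℝ) + 2 * Real.sqrt 2 - Real.sqrt 2 * Real.sqrt ((k:ℝ) + 2)) / Real.sqrt ((r:ℝ) + (k:ℝ) + 4)
          ≤ (2 * (k:ℝ) + 2 * Real.sqrt 2 - Real.sqrt 2 * Real.sqrt ((k:ℝ) + 2)) / (Real.sqrt 2 * Real.sqrt ((k:ℝ) + 2)) :=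
        div_le_div_of_nonneg_left hnum hSBpos hSBQ
      have hB2le : (2:ℝ) ≤ Real.sqrt ((k:ℝ) + 2) := by nlinarith [hB2, hB0]
      have hpoly := polyF hB2le rfl
      rw [hB2, show (k:ℝ) + 2 - 2 = (k:ℝ) by ring] at hpoly
      calc (2 * (k:ℝ) + 2 * Real.sqrt 2 - Real.sqrt 2 * Real.sqrt ((k:ℝ) + 2)) / Real.sqrt ((r:ℝ) + (k:ℝ) + 4) + 1
          ≤ (2 * (k:ℝ) + 2 * Real.sqrt 2 - Real.sqrt 2 * Real.sqrt ((k:ℝ) + 2)) / (Real.sqrt 2 * Real.sqrt ((k:ℝ) + 2)) + 1 := add_le_add_left hmono 1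
        _ < 2 * Real.sqrt 2 * Real.sqrt ((k:ℝ) + 2) / ((k:ℝ) + 4) + 2 * (k:ℝ) * Real.sqrt ((k:ℝ) + 2) / ((k:ℝ) + 3) := hpoly
        _ = 2 * Real.sqrt 2 * Real.sqrt ((k:ℝ) + 2) / ((k:ℝ) + 4) + (k:ℝ) * (2 * Real.sqrt ((k:ℝ) + 2)) / ((k:ℝ) + 3) := by ring
  have hsplit : ((r:ℝ) + (k:ℝ)) * (2 * Real.sqrt ((r:ℝ) + (k:ℝ) + 2)) / ((r:ℝ) + (k:ℝ) + 3)
      = (r:ℝ) * (2 * Real.sqrt ((r:ℝ) + (k:ℝ) + 2)) / ((r:ℝ) + (k:ℝ) + 3) + (k:ℝ) * (2 * Real.sqrt ((r:ℝ) + (k:ℝ) + 2)) / ((r:ℝ) + (k:ℝ) + 3) := by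
    ring
  have h4 : 4 * Real.sqrt 2 * Real.sqrt ((r:ℝ) + (k:ℝ) + 2) / ((r:ℝ) + (k:ℝ) + 4)
      = 2 * Real.sqrt 2 * Real.sqrt ((r:ℝ) + (k:ℝ) + 2) / ((r:ℝ) + (k:ℝ) + 4) + 2 * Real.sqrt 2 * Real.sqrt ((r:ℝ) + (k:ℝ) + 2) / ((r:ℝ) + (k:ℝ) + 4) := by ring
  rw [hsplit, h4]
  linarith [t1, t3, key]
end

section
/- For every integer q ≥ 5, 2q·(f(q+2) − f(2q+3)) > 1, where f(x) = 2√x/(x+1). -/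
set_option maxHeartbeats 800000


theorem Aqq_gt_one (q : ℕ) (hq : 5 ≤ q) :
    1 < 2 * (q : ℝ) *
      (2 * Real.sqrt ((q : ℝ) + 2) / (((q : ℝ) + 2) + 1)
        - 2 * Real.sqrt (2 * (q : ℝ) + 3) / ((2 * (q : ℝ) + 3) + 1)) := by
  have hq' : (5:ℝ) ≤ (q:ℝ) := by exact_mod_cast hq
  set x : ℝ := (q:ℝ) with hx
  set a : ℝ := Real.sqrt (x + 2) with hadef
  set b : ℝ := Real.sqrt (2 * x + 3) with hbdef
  have ha2 : a ^ 2 = x + 2 := Real.sq_sqrt (by linarith)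
  have hb2 : b ^ 2 = 2 * x + 3 := Real.sq_sqrt (by linarith)
  have ha : 0 < a := Real.sqrt_pos.mpr (by linarith)
  have hb : 0 < b := Real.sqrt_pos.mpr (by linarith)
  -- p := a*b
  have hp2 : (a * b) ^ 2 = (x + 2) * (2 * x + 3) := by
    rw [mul_pow, ha2, hb2]
  have hp1 : 1 < a * b := by nlinarith [mul_pos ha hb]
  -- set r := x - 5
  set r : ℝ := x - 5 with hrdef
  have hr : 0 ≤ r := by simp [hrdef]; linarith
  have hqr : x = r + 5 := by ring
  -- C and D
  set C : ℝ := 16*x^2*(x+1)^2*((x+2)*(2*x+3)+1) - (x+3)^2*(2*x+4)^2*(3*x+5) with hCdef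
  set D : ℝ := 32*x^2*(x+1)^2 + 2*(x+3)^2*(2*x+4)^2 with hDdef
  have hC : 0 < C := by
    have : C = 32*r^6 + 1124*r^5 + 16328*r^4 + 125252*r^3 + 533232*r^2
        + 1188288*r + 1073920 := by rw [hCdef, hqr]; ring
    rw [this]
    nlinarith [pow_nonneg hr 6, pow_nonneg hr 5, pow_nonneg hr 4,
      pow_nonneg hr 3, pow_nonneg hr 2, hr]
  have hD : 0 < D := by
    rw [hDdef]; nlinarith [sq_nonneg x, sq_nonneg (x+1), sq_nonneg (x+3), sq_nonneg (2*x+4)]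
  have hE : (x + 2) * (2 * x + 3) * D ^ 2 < C ^ 2 := by
    have h : C ^ 2 - (x + 2) * (2 * x + 3) * D ^ 2 =
        1024*r^12 + 71936*r^11 + 2305168*r^10 + 44527232*r^9 + 576971936*r^8
        + 5278137920*r^7 + 34907857168*r^6 + 167885514176*r^5 + 581384973888*r^4
        + 1409242621952*r^3 + 2259012753408*r^2 + 2134895542272*r
        + 889047760896 := by rw [hCdef, hDdef, hqr]; ring
    nlinarith [h, pow_nonneg hr 12, pow_nonneg hr 11, pow_nonneg hr 10,
      pow_nonneg hr 9, pow_nonneg hr 8, pow_nonneg hr 7, pow_nonneg hr 6,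
      pow_nonneg hr 5, pow_nonneg hr 4, pow_nonneg hr 3, pow_nonneg hr 2, hr]
  -- (a*b)*D < C
  have hCD : (a * b) * D < C := by
    have hsq : ((a * b) * D) ^ 2 < C ^ 2 := by
      calc ((a * b) * D) ^ 2 = (a*b)^2 * D^2 := by ring
        _ = (x + 2) * (2 * x + 3) * D ^ 2 := by rw [hp2]
        _ < C ^ 2 := hE
    exact lt_of_pow_lt_pow_left₀ 2 hC.le hsq
  -- R^2 < L^2
  have hab2 : (a + b) ^ 2 = 3 * x + 5 + 2 * (a * b) := by
    linear_combination ha2 + hb2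
  have hRL : ((x+3)*(2*x+4)*(a+b)) ^ 2 < (4*x*(x+1)*(a*b-1)) ^ 2 := by
    have e1 : (4*x*(x+1)*(a*b-1)) ^ 2
        = 16*x^2*(x+1)^2*((x+2)*(2*x+3)) - 32*x^2*(x+1)^2*(a*b) + 16*x^2*(x+1)^2 := by
      have : (4*x*(x+1)*(a*b-1)) ^ 2
          = 16*x^2*(x+1)^2*((a*b)^2) - 32*x^2*(x+1)^2*(a*b) + 16*x^2*(x+1)^2 := by ring
      rw [this, hp2]
    have e2 : ((x+3)*(2*x+4)*(a+b)) ^ 2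
        = (x+3)^2*(2*x+4)^2*(3*x+5) + 2*(x+3)^2*(2*x+4)^2*(a*b) := by
      have : ((x+3)*(2*x+4)*(a+b)) ^ 2 = (x+3)^2*(2*x+4)^2*((a+b)^2) := by ring
      rw [this, hab2]; ring
    rw [e1, e2]
    have : (a*b) * D = 32*x^2*(x+1)^2*(a*b) + 2*(x+3)^2*(2*x+4)^2*(a*b) := by
      rw [hDdef]; ring
    rw [hCdef] at hCD
    nlinarith [hCD]
  have hL : 0 < 4*x*(x+1)*(a*b-1) :=
    mul_pos (by nlinarith) (by linarith)
  have hkey : (x+3)*(2*x+4)*(a+b) < 4*x*(x+1)*(a*b-1) := by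
    have hRpos : 0 ≤ (x+3)*(2*x+4)*(a+b) := by positivity
    exact lt_of_pow_lt_pow_left₀ 2 hL.le hRL
  have hid : 4*x*(x+1)*(a*b-1) = (4*x*(b-a)*(a*b-1))*(a+b) := by
    linear_combination (4*x*(a*b-1))*ha2 - (4*x*(a*b-1))*hb2
  have hmain : (x+3)*(2*x+4) < 4*x*(b-a)*(a*b-1) := by
    rw [hid] at hkey
    have habpos : 0 < a + b := by linarith
    exact (mul_lt_mul_iff_of_pos_right habpos).mp hkey
  have h3 : (0:ℝ) < x + 3 := by linarith
  have h4 : (0:ℝ) < 2*x + 4 := by linarith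
  have goal_eq : ((x:ℝ)+2)+1 = x+3 := by ring
  have goal_eq2 : (2*(x:ℝ)+3)+1 = 2*x+4 := by ring
  rw [goal_eq, goal_eq2, div_sub_div _ _ h3.ne' h4.ne', ← mul_div_assoc,
    lt_div_iff₀ (by positivity), one_mul]
  have hid3 : 2*x*(2*a*(2*x+4) - (x+3)*(2*b)) = 4*x*(b-a)*(a*b-1) := by
    linear_combination (4*x*b)*ha2 - (4*x*a)*hb2
  rw [hid3]
  exact hmain
end

section
/- For real q ≥ 2 fixed and all real p ≥ 2, the function A(p,q) = p(f(p+2) − f(p+q+3)) + q(f(q+2) − f(p+q+3)) with f(x)=2√x/(x+1) is strictly increasing in p; equivalently its partial derivative (p²+9p+12)/((p+3)²√(p+2)) − ((p+q)²+12(p+q)+24)/((p+q+4)²√(p+q+3)) is positive. -/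
set_option maxHeartbeats 1000000 in
private lemma polyineq' (p q : ℝ) (hp : 2 ≤ p) (hq : 2 ≤ q) :
    (((p+q)^2+12*(p+q)+24)*(p+3)^2)^2*(p+2)
      < ((p^2+9*p+12)*((p+q)+4)^2)^2*((p+q)+3) := by
  have ha : (0:ℝ) ≤ p - 2 := by linarith
  have hb : (0:ℝ) ≤ q - 2 := by linarith
  linarith [mul_nonneg (pow_nonneg ha 0) (pow_nonneg hb 1),
    mul_nonneg (pow_nonneg ha 0) (pow_nonneg hb 2),
    mul_nonneg (pow_nonneg ha 0) (pow_nonneg hb 3),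
    mul_nonneg (pow_nonneg ha 0) (pow_nonneg hb 4),
    mul_nonneg (pow_nonneg ha 0) (pow_nonneg hb 5),
    mul_nonneg (pow_nonneg ha 1) (pow_nonneg hb 0),
    mul_nonneg (pow_nonneg ha 1) (pow_nonneg hb 1),
    mul_nonneg (pow_nonneg ha 1) (pow_nonneg hb 2),
    mul_nonneg (pow_nonneg ha 1) (pow_nonneg hb 3),
    mul_nonneg (pow_nonneg ha 1) (pow_nonneg hb 4),
    mul_nonneg (pow_nonneg ha 1) (pow_nonneg hb 5),
    mul_nonneg (pow_nonneg ha 2) (pow_nonneg hb 0),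
    mul_nonneg (pow_nonneg ha 2) (pow_nonneg hb 1),
    mul_nonneg (pow_nonneg ha 2) (pow_nonneg hb 2),
    mul_nonneg (pow_nonneg ha 2) (pow_nonneg hb 3),
    mul_nonneg (pow_nonneg ha 2) (pow_nonneg hb 4),
    mul_nonneg (pow_nonneg ha 2) (pow_nonneg hb 5),
    mul_nonneg (pow_nonneg ha 3) (pow_nonneg hb 0),
    mul_nonneg (pow_nonneg ha 3) (pow_nonneg hb 1),
    mul_nonneg (pow_nonneg ha 3) (pow_nonneg hb 2),
    mul_nonneg (pow_nonneg ha 3) (pow_nonneg hb 3),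
    mul_nonneg (pow_nonneg ha 3) (pow_nonneg hb 4),
    mul_nonneg (pow_nonneg ha 3) (pow_nonneg hb 5),
    mul_nonneg (pow_nonneg ha 4) (pow_nonneg hb 0),
    mul_nonneg (pow_nonneg ha 4) (pow_nonneg hb 1),
    mul_nonneg (pow_nonneg ha 4) (pow_nonneg hb 2),
    mul_nonneg (pow_nonneg ha 4) (pow_nonneg hb 3),
    mul_nonneg (pow_nonneg ha 4) (pow_nonneg hb 4),
    mul_nonneg (pow_nonneg ha 4) (pow_nonneg hb 5),
    mul_nonneg (pow_nonneg ha 5) (pow_nonneg hb 0),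
    mul_nonneg (pow_nonneg ha 5) (pow_nonneg hb 1),
    mul_nonneg (pow_nonneg ha 5) (pow_nonneg hb 2),
    mul_nonneg (pow_nonneg ha 5) (pow_nonneg hb 3),
    mul_nonneg (pow_nonneg ha 5) (pow_nonneg hb 4),
    mul_nonneg (pow_nonneg ha 6) (pow_nonneg hb 0),
    mul_nonneg (pow_nonneg ha 6) (pow_nonneg hb 1),
    mul_nonneg (pow_nonneg ha 6) (pow_nonneg hb 2),
    mul_nonneg (pow_nonneg ha 6) (pow_nonneg hb 3),
    mul_nonneg (pow_nonneg ha 7) (pow_nonneg hb 0),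
    mul_nonneg (pow_nonneg ha 7) (pow_nonneg hb 1),
    mul_nonneg (pow_nonneg ha 7) (pow_nonneg hb 2),
    mul_nonneg (pow_nonneg ha 8) (pow_nonneg hb 0),
    mul_nonneg (pow_nonneg ha 8) (pow_nonneg hb 1)]

private lemma key'_s17 (p q : ℝ) (hp : 2 ≤ p) (hq : 2 ≤ q) :
    0 < (p ^ 2 + 9 * p + 12) / ((p + 3) ^ 2 * Real.sqrt (p + 2))
          - ((p + q) ^ 2 + 12 * (p + q) + 24) / ((p + q + 4) ^ 2 * Real.sqrt (p + q + 3)) := by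
  have ha0 : (0:ℝ) < p + 2 := by linarith
  have hb0 : (0:ℝ) < p + q + 3 := by linarith
  have ha : 0 < Real.sqrt (p + 2) := Real.sqrt_pos.mpr ha0
  have hb : 0 < Real.sqrt (p + q + 3) := Real.sqrt_pos.mpr hb0
  have ha2 : Real.sqrt (p + 2) ^ 2 = p + 2 := Real.sq_sqrt ha0.le
  have hb2 : Real.sqrt (p + q + 3) ^ 2 = p + q + 3 := Real.sq_sqrt hb0.le
  set a := Real.sqrt (p + 2) with hadef
  set b := Real.sqrt (p + q + 3) with hbdef
  rw [sub_pos, div_lt_div_iff₀ (by positivity) (by positivity)]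
  have hpoly := polyineq' p q hp hq
  have h2 : (((p + q) ^ 2 + 12 * (p + q) + 24) * ((p + 3) ^ 2 * a)) ^ 2
      < ((p ^ 2 + 9 * p + 12) * ((p + q + 4) ^ 2 * b)) ^ 2 := by
    calc (((p + q) ^ 2 + 12 * (p + q) + 24) * ((p + 3) ^ 2 * a)) ^ 2
        = (((p+q)^2+12*(p+q)+24)*(p+3)^2)^2 * a ^ 2 := by ring
      _ = (((p+q)^2+12*(p+q)+24)*(p+3)^2)^2 * (p+2) := by rw [ha2]
      _ < ((p^2+9*p+12)*((p+q)+4)^2)^2*((p+q)+3) := hpoly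
      _ = ((p^2+9*p+12)*((p+q)+4)^2)^2 * b ^ 2 := by rw [hb2]
      _ = ((p ^ 2 + 9 * p + 12) * ((p + q + 4) ^ 2 * b)) ^ 2 := by ring
  have hX : 0 < (p ^ 2 + 9 * p + 12) := by nlinarith
  have hY : 0 < ((p + q) ^ 2 + 12 * (p + q) + 24) := by nlinarith
  exact lt_of_pow_lt_pow_left₀ 2 (by positivity) h2

private lemma hasDeriv' (q x : ℝ) (hq : 2 ≤ q) (hx : 2 ≤ x) :
    HasDerivAt (fun p : ℝ =>
        p * (2 * Real.sqrt (p + 2) / ((p + 2) + 1) - 2 * Real.sqrt (p + q + 3) / ((p + q + 3) + 1))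
        + q * (2 * Real.sqrt (q + 2) / ((q + 2) + 1) - 2 * Real.sqrt (p + q + 3) / ((p + q + 3) + 1)))
      ((x ^ 2 + 9 * x + 12) / ((x + 3) ^ 2 * Real.sqrt (x + 2))
        - ((x + q) ^ 2 + 12 * (x + q) + 24) / ((x + q + 4) ^ 2 * Real.sqrt (x + q + 3))) x := by
  have ha0 : (0:ℝ) < x + 2 := by linarith
  have hb0 : (0:ℝ) < x + q + 3 := by linarith
  have ha : 0 < Real.sqrt (x + 2) := Real.sqrt_pos.mpr ha0
  have hb : 0 < Real.sqrt (x + q + 3) := Real.sqrt_pos.mpr hb0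
  have ha2 : Real.sqrt (x + 2) ^ 2 = x + 2 := Real.sq_sqrt ha0.le
  have hb2 : Real.sqrt (x + q + 3) ^ 2 = x + q + 3 := Real.sq_sqrt hb0.le
  have h1 : HasDerivAt (fun p : ℝ => p + 2) 1 x := (hasDerivAt_id x).add_const 2
  have h2 : HasDerivAt (fun p : ℝ => p + q + 3) 1 x := ((hasDerivAt_id x).add_const q).add_const 3
  have hs1 : HasDerivAt (fun p : ℝ => Real.sqrt (p + 2)) (1 / (2 * Real.sqrt (x + 2))) x := by
    simpa using h1.sqrt ha0.ne'
  have hs2 : HasDerivAt (fun p : ℝ => Real.sqrt (p + q + 3)) (1 / (2 * Real.sqrt (x + q + 3))) x := by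
    simpa using h2.sqrt hb0.ne'
  have hden1 : ((x:ℝ) + 2) + 1 ≠ 0 := by linarith
  have hden2 : ((x:ℝ) + q + 3) + 1 ≠ 0 := by linarith
  have hu : HasDerivAt (fun p : ℝ => 2 * Real.sqrt (p + 2) / ((p + 2) + 1))
      ((2 * (1 / (2 * Real.sqrt (x + 2))) * ((x + 2) + 1) - 2 * Real.sqrt (x + 2) * 1)
        / ((x + 2) + 1) ^ 2) x :=
    (hs1.const_mul 2).div (h1.add_const 1) hden1
  have hv : HasDerivAt (fun p : ℝ => 2 * Real.sqrt (p + q + 3) / ((p + q + 3) + 1))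
      ((2 * (1 / (2 * Real.sqrt (x + q + 3))) * ((x + q + 3) + 1) - 2 * Real.sqrt (x + q + 3) * 1)
        / ((x + q + 3) + 1) ^ 2) x :=
    (hs2.const_mul 2).div (h2.add_const 1) hden2
  have hmul : HasDerivAt (fun p : ℝ =>
      p * (2 * Real.sqrt (p + 2) / ((p + 2) + 1) - 2 * Real.sqrt (p + q + 3) / ((p + q + 3) + 1)))
      (1 * (2 * Real.sqrt (x + 2) / ((x + 2) + 1) - 2 * Real.sqrt (x + q + 3) / ((x + q + 3) + 1))
        + x * ((2 * (1 / (2 * Real.sqrt (x + 2))) * ((x + 2) + 1) - 2 * Real.sqrt (x + 2) * 1)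
        / ((x + 2) + 1) ^ 2 -
        (2 * (1 / (2 * Real.sqrt (x + q + 3))) * ((x + q + 3) + 1) - 2 * Real.sqrt (x + q + 3) * 1)
        / ((x + q + 3) + 1) ^ 2)) x :=
    (hasDerivAt_id x).mul (hu.sub hv)
  have hcon : HasDerivAt (fun p : ℝ =>
      q * (2 * Real.sqrt (q + 2) / ((q + 2) + 1) - 2 * Real.sqrt (p + q + 3) / ((p + q + 3) + 1)))
      (q * (0 - (2 * (1 / (2 * Real.sqrt (x + q + 3))) * ((x + q + 3) + 1)
        - 2 * Real.sqrt (x + q + 3) * 1) / ((x + q + 3) + 1) ^ 2)) x :=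
    ((hasDerivAt_const x (2 * Real.sqrt (q + 2) / ((q + 2) + 1))).sub hv).const_mul q
  have total := hmul.add hcon
  refine total.congr_deriv ?_
  symm
  set a := Real.sqrt (x + 2) with hadef
  set b := Real.sqrt (x + q + 3) with hbdef
  have hxa : x = a ^ 2 - 2 := by linarith
  have hqb : q = b ^ 2 - a ^ 2 - 1 := by nlinarith
  rw [hxa, hqb]
  have ha' : a ≠ 0 := ne_of_gt ha
  have hb' : b ≠ 0 := ne_of_gt hb
  have h3 : a ^ 2 + 1 ≠ 0 := by positivity
  have h4 : b ^ 2 + 1 ≠ 0 := by positivity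
  have h5 : (1:ℝ) + a ^ 2 ≠ 0 := by positivity
  have h6 : (1:ℝ) + b ^ 2 ≠ 0 := by positivity
  ring_nf
  field_simp
  ring

theorem A_strictMono_in_p (q : ℝ) (hq : 2 ≤ q) :
    StrictMonoOn (fun p : ℝ =>
        p * (2 * Real.sqrt (p + 2) / ((p + 2) + 1) - 2 * Real.sqrt (p + q + 3) / ((p + q + 3) + 1))
        + q * (2 * Real.sqrt (q + 2) / ((q + 2) + 1) - 2 * Real.sqrt (p + q + 3) / ((p + q + 3) + 1)))
      (Set.Ici 2) ∧
    ∀ p : ℝ, 2 ≤ p →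
      0 < (p ^ 2 + 9 * p + 12) / ((p + 3) ^ 2 * Real.sqrt (p + 2))
          - ((p + q) ^ 2 + 12 * (p + q) + 24) / ((p + q + 4) ^ 2 * Real.sqrt (p + q + 3)) := by
  constructor
  · apply strictMonoOn_of_hasDerivWithinAt_pos (f' := fun x =>
      (x ^ 2 + 9 * x + 12) / ((x + 3) ^ 2 * Real.sqrt (x + 2))
        - ((x + q) ^ 2 + 12 * (x + q) + 24) / ((x + q + 4) ^ 2 * Real.sqrt (x + q + 3)))
      (convex_Ici 2)
    · intro x hx
      exact (hasDeriv' q x hq hx).continuousAt.continuousWithinAt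
    · intro x hx
      rw [interior_Ici] at hx
      exact (hasDeriv' q x hq (le_of_lt hx)).hasDerivWithinAt
    · intro x hx
      rw [interior_Ici] at hx
      exact key'_s17 x q (le_of_lt hx) hq
  · intro p hp
    exact key'_s17 p q hp hq
end

section
/- For all real p ≥ 0, 2(g(p+2) − g(p+3)) + (1 − f(p+3)) + 1 > 1, where f(x)=2√x/(x+1) and g(x)=2√2√x/(x+2); that is, B(p,0) = 2g(p+2) + 2g(2) − 2g(p+3) − f(p+3) > 1. -/
theorem Bp0_gt_one (p : ℝ) (hp : 0 ≤ p) :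
    1 < 2 * (2 * Real.sqrt 2 * Real.sqrt (p + 2) / ((p + 2) + 2))
        + 2 * (2 * Real.sqrt 2 * Real.sqrt 2 / (2 + 2))
        - 2 * (2 * Real.sqrt 2 * Real.sqrt (p + 3) / ((p + 3) + 2))
        - 2 * Real.sqrt (p + 3) / ((p + 3) + 1) := by
  set s := Real.sqrt 2 with hs
  set a := Real.sqrt (p + 2) with hadef
  set b := Real.sqrt (p + 3) with hbdef
  have hs0 : 0 ≤ s := Real.sqrt_nonneg 2
  have hs2 : s * s = 2 := Real.mul_self_sqrt (by norm_num)
  have ha0 : 0 ≤ a := Real.sqrt_nonneg _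
  have hb0 : 0 ≤ b := Real.sqrt_nonneg _
  have ha2 : a ^ 2 = p + 2 := Real.sq_sqrt (by linarith)
  have hb2 : b ^ 2 = p + 3 := Real.sq_sqrt (by linarith)
  have hb1 : 1 < b := by nlinarith
  have key : b * (p + 4) ≤ a * (p + 5) := by
    nlinarith [sq_nonneg (a * (p + 5) - b * (p + 4)),
      mul_nonneg (mul_nonneg ha0 hb0) hp, mul_nonneg ha0 hb0,
      sq_nonneg (a - b), sq_nonneg (a + b)]
  have h1 : 2 * s * b / ((p + 3) + 2) ≤ 2 * s * a / ((p + 2) + 2) := by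
    rw [div_le_div_iff₀ (by linarith) (by linarith)]
    nlinarith [mul_le_mul_of_nonneg_left key (by linarith : (0:ℝ) ≤ 2 * s)]
  have h3 : 2 * b / ((p + 3) + 1) < 1 := by
    rw [div_lt_one (by linarith)]
    nlinarith [sq_nonneg (b - 1)]
  have h2 : 2 * (2 * s * s / (2 + 2)) = 2 := by rw [mul_assoc, hs2]; ring
  linarith
end
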